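/- arXiv:0910.4566 — 3 statements merged into one kernel-verified Lean document; each statement's English description precedes it below -/
import Mathlib

section
/- Let (ξ_n, ξ_n')_{n∈ℤ} be a sequence of pairwise disjoint geodesics in the hyperbolic plane such that for all n, the geodesics (ξ_m, ξ_m') with m > n all lie on one side of (ξ_n, ξ_n') and those with m < n lie on the other side (i.e., the corresponding boundary intervals [ξ_n, ξ_n'] not containing ξ_0, ξ_0' are nested for n → +∞ and for n → −∞). Then there exist distinct points ξ_{+∞}, ξ_{−∞} on the boundary circle ∂∞ℍ such that the geodesic from ξ_{−∞} to ξ_{+∞} crosses every geodesic (ξ_n, ξ_n'), and crosses them in order of increasing n. -/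
open Complex

/-- The unit circle, the boundary at infinity of the Poincaré disk. -/
def BdryCircle : Set ℂ := {z : ℂ | ‖z‖ = 1}

/-- For `a ≠ b` on the unit circle, the hyperbolic geodesic with ideal endpoints
`a, b` separates the disk and the circle the same way as the Euclidean chord
through `a` and `b`.  `SameSideChord a b c d` says that `c` and `d` lie strictly
on the same side of that chord. -/
def SameSideChord (a b c d : ℂ) : Prop :=
  0 < (((c - a) / (b - a)).im) * (((d - a) / (b - a)).im)

/-- `c` and `d` lie strictly on opposite sides of the geodesic (chord) `(a,b)`;
for boundary points this says the geodesic `(c,d)` crosses the geodesic `(a,b)`. -/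
def SeparatedByChord (a b c d : ℂ) : Prop :=
  (((c - a) / (b - a)).im) * (((d - a) / (b - a)).im) < 0

/-!
Orient the `n`-th geodesic so that the geodesics of larger index lie on its positive side.
The point `ξ₊∞` is a cluster point of `ξ n` as `n → +∞` on the compact circle: it lies in
the closed positive half of every oriented chord. It cannot lie on the `n`-th geodesic itself,
since the endpoints of that geodesic are on the negative side of the `(n+1)`-st one; the circle
meets a chord only at its endpoints, so `ξ₊∞` lies strictly on the positive side of every
chord. Symmetrically `ξ₋∞`, a cluster point as `n → -∞`, is strictly on every negative side.
-/

open Filter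

theorem IsCompact.exists_forall_mem_of_eventually_mem {X ι κ : Type*} [TopologicalSpace X]
    {K : Set X} (hK : IsCompact K) {l : Filter ι} {p : ι → X} (hp : ∃ᶠ j in l, p j ∈ K)
    {t : κ → Set X} (ht : ∀ i, IsClosed (t i)) (hpt : ∀ i, ∀ᶠ j in l, p j ∈ t i) :
    ∃ x ∈ K, ∀ i, x ∈ t i := by
  obtain ⟨x, hxK, hx⟩ := hK.exists_mapClusterPt_of_frequently hp
  exact ⟨x, hxK, fun i => (ht i).closure_subset (hx.mem_closure_of_mem _ (hpt i))⟩

theorem isCompact_bdryCircle : IsCompact BdryCircle := by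
  convert isCompact_sphere (0 : ℂ) 1
  ext z
  simp [BdryCircle]

noncomputable def chordSide (a b z : ℂ) : ℝ := ((z - a) / (b - a)).im

theorem continuous_chordSide (a b : ℂ) : Continuous (chordSide a b) := by
  unfold chordSide
  fun_prop

theorem eq_or_eq_of_chordSide_eq_zero {a b z : ℂ} (ha : ‖a‖ = 1) (hb : ‖b‖ = 1) (hz : ‖z‖ = 1)
    (hab : a ≠ b) (h : chordSide a b z = 0) : z = a ∨ z = b := by
  have hba : b - a ≠ 0 := sub_ne_zero.2 hab.symm
  set t : ℝ := ((z - a) / (b - a)).re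
  have hzt : z = a + t * (b - a) := by
    have : (z - a) / (b - a) = t := Complex.ext rfl (by simpa [chordSide] using h)
    rw [div_eq_iff hba] at this
    linear_combination this
  have hunit : ∀ w : ℂ, ‖w‖ = 1 → w.re * w.re + w.im * w.im = 1 := fun w hw => by
    rw [← Complex.normSq_apply, Complex.normSq_eq_norm_sq, hw, one_pow]
  have hquad : t * (t - 1) * Complex.normSq (b - a) = 0 := by
    have hz' := hunit z hz
    rw [hzt] at hz'
    simp only [Complex.add_re, Complex.add_im, Complex.mul_re, Complex.mul_im, Complex.ofReal_re,
      Complex.ofReal_im, Complex.sub_re, Complex.sub_im] at hz'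
    rw [Complex.normSq_apply]
    simp only [Complex.sub_re, Complex.sub_im]
    linear_combination hz' + (t - 1) * hunit a ha - t * hunit b hb
  rcases mul_eq_zero.1 hquad with ht | hn
  · rcases mul_eq_zero.1 ht with h0 | h1
    · left; simp [hzt, h0]
    · right; simp [hzt, sub_eq_zero.1 h1]
  · exact absurd (Complex.normSq_eq_zero.1 hn) hba

theorem sameSideChord_iff {a b c d : ℂ} :
    SameSideChord a b c d ↔ 0 < chordSide a b c * chordSide a b d := Iff.rfl

theorem separatedByChord_iff {a b c d : ℂ} :
    SeparatedByChord a b c d ↔ chordSide a b c * chordSide a b d < 0 := Iff.rfl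

theorem mul_pos_of_mul_neg_of_mul_neg {a b c : ℝ} (ha : a * c < 0) (hb : b * c < 0) :
    0 < a * b := by
  nlinarith [mul_pos (neg_pos.2 ha) (neg_pos.2 hb), sq_nonneg c]

theorem mul_pos_of_mul_pos_of_mul_pos {c x y : ℝ} (hx : 0 < c * x) (hxy : 0 < x * y) :
    0 < c * y := by
  nlinarith [mul_pos hx hxy, sq_nonneg x]

theorem mul_neg_of_mul_neg_of_mul_pos {c x y : ℝ} (hx : c * x < 0) (hxy : 0 < x * y) :
    c * y < 0 := by
  nlinarith [mul_pos (neg_pos.2 hx) hxy, sq_nonneg x]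

/-- Scaling by the side of `ξ (n + 1)` orients the `n`-th chord so that, under the nesting
hypothesis, the later geodesics lie on its positive side. -/
noncomputable def orientedSide (ξ ξ' : ℤ → ℂ) (n : ℤ) (z : ℂ) : ℝ :=
  chordSide (ξ n) (ξ' n) (ξ (n + 1)) * chordSide (ξ n) (ξ' n) z

section OrientedSide

variable {ξ ξ' : ℤ → ℂ}

theorem continuous_orientedSide (n : ℤ) : Continuous (orientedSide ξ ξ' n) :=
  continuous_const.mul (continuous_chordSide _ _)

theorem chordSide_succ_ne_zero
    (hnest : ∀ n m m' : ℤ, m' < n → n < m → SeparatedByChord (ξ n) (ξ' n) (ξ m) (ξ m'))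
    (n : ℤ) : chordSide (ξ n) (ξ' n) (ξ (n + 1)) ≠ 0 := by
  intro h
  have hsep := separatedByChord_iff.1 (hnest n (n + 1) (n - 1) (by omega) (by omega))
  rw [h, zero_mul] at hsep
  exact hsep.false

theorem sameSideChord_iff_orientedSide
    (hnest : ∀ n m m' : ℤ, m' < n → n < m → SeparatedByChord (ξ n) (ξ' n) (ξ m) (ξ m'))
    (n : ℤ) (c d : ℂ) :
    SameSideChord (ξ n) (ξ' n) c d ↔ 0 < orientedSide ξ ξ' n c * orientedSide ξ ξ' n d := by
  rw [orientedSide, orientedSide, mul_mul_mul_comm,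
    mul_pos_iff_of_pos_left (mul_self_pos.2 (chordSide_succ_ne_zero hnest n)), sameSideChord_iff]

theorem separatedByChord_iff_orientedSide
    (hnest : ∀ n m m' : ℤ, m' < n → n < m → SeparatedByChord (ξ n) (ξ' n) (ξ m) (ξ m'))
    (n : ℤ) (c d : ℂ) :
    SeparatedByChord (ξ n) (ξ' n) c d ↔ orientedSide ξ ξ' n c * orientedSide ξ ξ' n d < 0 := by
  rw [orientedSide, orientedSide, mul_mul_mul_comm, ← smul_eq_mul (_ * _),
    smul_neg_iff_of_pos_left (mul_self_pos.2 (chordSide_succ_ne_zero hnest n)),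
    separatedByChord_iff]

theorem orientedSide_pos_of_lt
    (hdisj : ∀ m n, m ≠ n → SameSideChord (ξ n) (ξ' n) (ξ m) (ξ' m))
    (hnest : ∀ n m m' : ℤ, m' < n → n < m → SeparatedByChord (ξ n) (ξ' n) (ξ m) (ξ m'))
    {n m : ℤ} (h : n < m) : 0 < orientedSide ξ ξ' n (ξ m) ∧ 0 < orientedSide ξ ξ' n (ξ' m) := by
  have hm : 0 < orientedSide ξ ξ' n (ξ m) :=
    mul_pos_of_mul_neg_of_mul_neg (hnest n (n + 1) (n - 1) (by omega) (by omega))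
      (hnest n m (n - 1) (by omega) h)
  exact ⟨hm, mul_pos_of_mul_pos_of_mul_pos hm (hdisj m n h.ne')⟩

theorem orientedSide_neg_of_lt
    (hdisj : ∀ m n, m ≠ n → SameSideChord (ξ n) (ξ' n) (ξ m) (ξ' m))
    (hnest : ∀ n m m' : ℤ, m' < n → n < m → SeparatedByChord (ξ n) (ξ' n) (ξ m) (ξ m'))
    {n m : ℤ} (h : m < n) : orientedSide ξ ξ' n (ξ m) < 0 ∧ orientedSide ξ ξ' n (ξ' m) < 0 := by
  have hm : orientedSide ξ ξ' n (ξ m) < 0 := hnest n (n + 1) m h (by omega)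
  exact ⟨hm, mul_neg_of_mul_neg_of_mul_pos hm (hdisj m n h.ne)⟩

theorem eq_or_eq_of_orientedSide_eq_zero (hbd : ∀ n, ξ n ∈ BdryCircle ∧ ξ' n ∈ BdryCircle)
    (hne : ∀ n, ξ n ≠ ξ' n)
    (hnest : ∀ n m m' : ℤ, m' < n → n < m → SeparatedByChord (ξ n) (ξ' n) (ξ m) (ξ m'))
    {n : ℤ} {z : ℂ} (hz : z ∈ BdryCircle) (h : orientedSide ξ ξ' n z = 0) :
    z = ξ n ∨ z = ξ' n :=
  eq_or_eq_of_chordSide_eq_zero (hbd n).1 (hbd n).2 hz (hne n)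
    ((mul_eq_zero.1 h).resolve_left (chordSide_succ_ne_zero hnest n))

theorem orientedSide_pos_of_forall_nonneg (hbd : ∀ n, ξ n ∈ BdryCircle ∧ ξ' n ∈ BdryCircle)
    (hne : ∀ n, ξ n ≠ ξ' n)
    (hdisj : ∀ m n, m ≠ n → SameSideChord (ξ n) (ξ' n) (ξ m) (ξ' m))
    (hnest : ∀ n m m' : ℤ, m' < n → n < m → SeparatedByChord (ξ n) (ξ' n) (ξ m) (ξ m'))
    {z : ℂ} (hz : z ∈ BdryCircle) (h : ∀ n, 0 ≤ orientedSide ξ ξ' n z) (n : ℤ) :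
    0 < orientedSide ξ ξ' n z := by
  refine (h n).lt_of_ne' fun h0 => ?_
  have hnext := orientedSide_neg_of_lt hdisj hnest (lt_add_one n)
  rcases eq_or_eq_of_orientedSide_eq_zero hbd hne hnest hz h0 with rfl | rfl
  · exact (h (n + 1)).not_gt hnext.1
  · exact (h (n + 1)).not_gt hnext.2

theorem orientedSide_neg_of_forall_nonpos (hbd : ∀ n, ξ n ∈ BdryCircle ∧ ξ' n ∈ BdryCircle)
    (hne : ∀ n, ξ n ≠ ξ' n)
    (hdisj : ∀ m n, m ≠ n → SameSideChord (ξ n) (ξ' n) (ξ m) (ξ' m))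
    (hnest : ∀ n m m' : ℤ, m' < n → n < m → SeparatedByChord (ξ n) (ξ' n) (ξ m) (ξ m'))
    {z : ℂ} (hz : z ∈ BdryCircle) (h : ∀ n, orientedSide ξ ξ' n z ≤ 0) (n : ℤ) :
    orientedSide ξ ξ' n z < 0 := by
  refine (h n).lt_of_ne fun h0 => ?_
  have hprev := orientedSide_pos_of_lt hdisj hnest (sub_one_lt n)
  rcases eq_or_eq_of_orientedSide_eq_zero hbd hne hnest hz h0 with rfl | rfl
  · exact (h (n - 1)).not_gt hprev.1
  · exact (h (n - 1)).not_gt hprev.2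

end OrientedSide

/-- given a biinfinite sequence of pairwise disjoint geodesics
`(ξ_n, ξ_n')` of the Poincaré disk such that, for every `n`, the geodesics with
index `> n` lie on one side of `(ξ_n, ξ_n')` and those with index `< n` on the
other side, there are distinct boundary points `ξ₋∞, ξ₊∞` such that the geodesic
`(ξ₋∞, ξ₊∞)` crosses every `(ξ_n, ξ_n')`, in the order of increasing `n`. -/
theorem stmt5 (ξ ξ' : ℤ → ℂ)
    (hbd : ∀ n, ξ n ∈ BdryCircle ∧ ξ' n ∈ BdryCircle)
    (hne : ∀ n, ξ n ≠ ξ' n)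
    (hdisj : ∀ m n, m ≠ n →
      SameSideChord (ξ n) (ξ' n) (ξ m) (ξ' m))
    (hnest : ∀ n m m' : ℤ, m' < n → n < m →
      SeparatedByChord (ξ n) (ξ' n) (ξ m) (ξ m')) :
    ∃ ξm ξp : ℂ, ξm ∈ BdryCircle ∧ ξp ∈ BdryCircle ∧ ξm ≠ ξp ∧
      (∀ n, SeparatedByChord (ξ n) (ξ' n) ξm ξp) ∧
      (∀ m n, m < n →
        SameSideChord (ξ m) (ξ' m) (ξ n) ξp ∧
        SameSideChord (ξ n) (ξ' n) (ξ m) ξm) := by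
  have hclosed_pos (n : ℤ) : IsClosed {z | 0 ≤ orientedSide ξ ξ' n z} :=
    isClosed_le continuous_const (continuous_orientedSide n)
  have hclosed_neg (n : ℤ) : IsClosed {z | orientedSide ξ ξ' n z ≤ 0} :=
    isClosed_le (continuous_orientedSide n) continuous_const
  obtain ⟨ξp, hξp, hp⟩ := isCompact_bdryCircle.exists_forall_mem_of_eventually_mem
    (l := atTop) (Frequently.of_forall fun m => (hbd m).1) hclosed_pos
    fun n => (eventually_gt_atTop n).mono fun _ hm => (orientedSide_pos_of_lt hdisj hnest hm).1.le
  obtain ⟨ξm, hξm, hm⟩ := isCompact_bdryCircle.exists_forall_mem_of_eventually_mem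
    (l := atBot) (Frequently.of_forall fun m => (hbd m).1) hclosed_neg
    fun n => (eventually_lt_atBot n).mono fun _ hm => (orientedSide_neg_of_lt hdisj hnest hm).1.le
  have hp' := orientedSide_pos_of_forall_nonneg hbd hne hdisj hnest hξp hp
  have hm' := orientedSide_neg_of_forall_nonpos hbd hne hdisj hnest hξm hm
  refine ⟨ξm, ξp, hξm, hξp, fun h => (hm' 0).not_gt (h ▸ hp' 0), fun n => ?_, fun m n hmn => ⟨?_, ?_⟩⟩
  · exact (separatedByChord_iff_orientedSide hnest n _ _).2 (mul_neg_of_neg_of_pos (hm' n) (hp' n))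
  · exact (sameSideChord_iff_orientedSide hnest m _ _).2
      (mul_pos (orientedSide_pos_of_lt hdisj hnest hmn).1 (hp' m))
  · exact (sameSideChord_iff_orientedSide hnest n _ _).2
      (mul_pos_of_neg_of_neg (orientedSide_neg_of_lt hdisj hnest hmn).1 (hm' n))
end

section
/- Let D be a bounded convex subset of the hyperbolic plane of diameter R, let γ₁, γ₂ be two distinct geodesics through a point y, and suppose z lies in one of the angular sectors at y between γ₁ and γ₂ with dist(z, γ₁ ∪ γ₂) > R. Then any isometric copy of D containing z is entirely contained in that angular sector. -/
open UpperHalfPlane Set Filter MeasureTheory Pointwise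

local notation "SL2R" => Matrix.SpecialLinearGroup (Fin 2) ℝ

/-- A subgroup of `SL(2,ℝ)`, acting on `ℍ` by Möbius transformations, is
Fuchsian iff it acts properly discontinuously (equivalent to discreteness). -/
def IsFuchsian (Γ : Subgroup SL2R) : Prop :=
  ∀ z : ℍ, ∀ r : ℝ, {γ : Γ | dist (((γ : SL2R)) • z) z ≤ r}.Finite

/-- The Dirichlet domain of `Γ` centered at `x`. -/
def DirichletDomain (Γ : Subgroup SL2R) (x : ℍ) : Set ℍ :=
  {z : ℍ | ∀ γ : Γ, dist z x ≤ dist z (((γ : SL2R)) • x)}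

/-- `x` is fixed by no element of `Γ` other than `±1` (which act trivially). -/
def FreeCenter (Γ : Subgroup SL2R) (x : ℍ) : Prop :=
  ∀ γ : Γ, ((γ : SL2R)) • x = x → (γ : SL2R) = 1 ∨ (γ : SL2R) = -1

/-- The hyperbolic area of a subset of the upper half-plane. -/
noncomputable def hypArea (S : Set ℍ) : ENNReal :=
  ∫⁻ z in ((fun w : ℍ => (w : ℂ)) '' S), ENNReal.ofReal (1 / z.im ^ 2)

/-- A (finite) vertex of the tessellation of `ℍ` by the copies of `D`:
a point of `ℍ` lying in at least three distinct tiles. -/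
def IsTessVertex (Γ : Subgroup SL2R) (D : Set ℍ) (v : ℍ) : Prop :=
  ∃ a b c : Γ, (a : SL2R) • D ≠ (b : SL2R) • D ∧ (a : SL2R) • D ≠ (c : SL2R) • D ∧
    (b : SL2R) • D ≠ (c : SL2R) • D ∧
    v ∈ (a : SL2R) • D ∧ v ∈ (b : SL2R) • D ∧ v ∈ (c : SL2R) • D

/-- An edge of the tessellation: the (infinite) intersection of two distinct
tiles. -/
def IsTessEdge (Γ : Subgroup SL2R) (D : Set ℍ) (e : Set ℍ) : Prop :=
  ∃ a b : Γ, (a : SL2R) • D ≠ (b : SL2R) • D ∧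
    e = ((a : SL2R) • D) ∩ ((b : SL2R) • D) ∧ e.Infinite

/-- A complete unit-speed geodesic of `ℍ`. -/
def IsGeodesicLine (γ : ℝ → ℍ) : Prop :=
  ∀ s t : ℝ, dist (γ s) (γ t) = |s - t|

/-- Hyperbolic convexity of a subset of `ℍ`. -/
def IsHConvex (S : Set ℍ) : Prop :=
  ∀ γ : ℝ → ℍ, IsGeodesicLine γ →
    ∀ a b : ℝ, γ a ∈ S → γ b ∈ S → ∀ c ∈ Set.uIcc a b, γ c ∈ S


/-- let `D` be a bounded convex subset of `ℍ` of diameter `R`,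
let `γ₁, γ₂` be two distinct geodesics through a point `y`, and let `z` be a
point of one of the angular sectors at `y` between `γ₁` and `γ₂` (a connected
component of the complement of `γ₁ ∪ γ₂`) with `dist(z, γ₁ ∪ γ₂) > R`.  Then
any isometric copy of `D` containing `z` is entirely contained in that sector. -/
theorem stmt10 (D : Set ℍ) (hDconv : IsHConvex D)
    (hDbdd : Bornology.IsBounded D) (R : ℝ) (hdiam : Metric.diam D = R)
    (y : ℍ) (γ₁ γ₂ : ℝ → ℍ)
    (hγ₁ : IsGeodesicLine γ₁) (hγ₂ : IsGeodesicLine γ₂)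
    (hy₁ : y ∈ Set.range γ₁) (hy₂ : y ∈ Set.range γ₂)
    (hdistinct : Set.range γ₁ ≠ Set.range γ₂)
    (z : ℍ) (hz : z ∉ Set.range γ₁ ∪ Set.range γ₂)
    (hfar : R < Metric.infDist z (Set.range γ₁ ∪ Set.range γ₂))
    -- an isometric copy of `D` containing `z`
    (f : ℍ ≃ᵢ ℍ) (hzf : z ∈ f '' D) :
    f '' D ⊆ connectedComponentIn (Set.range γ₁ ∪ Set.range γ₂)ᶜ z := by
  set U := (Set.range γ₁ ∪ Set.range γ₂)ᶜ with hU
  set r := Metric.infDist z (Set.range γ₁ ∪ Set.range γ₂) with hr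
  have hball_sub : Metric.ball z r ⊆ U := by
    intro w hw
    simp only [hU, Set.mem_compl_iff]
    intro hwmem
    exact absurd (Metric.infDist_le_dist_of_mem hwmem) (not_le.mpr (by rwa [dist_comm, ← Metric.mem_ball]))
  have hzU : z ∈ U := hz
  have hDsub : f '' D ⊆ Metric.ball z r := by
    intro w hw
    have hbdd : Bornology.IsBounded (f '' D) := f.isometry.lipschitz.isBounded_image hDbdd
    have : dist w z ≤ Metric.diam (f '' D) := Metric.dist_le_diam_of_mem hbdd hw hzf
    rw [f.diam_image, hdiam] at this
    exact Metric.mem_ball.mpr (lt_of_le_of_lt this hfar)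
  have hzball : z ∈ Metric.ball z r := by
    have : (0:ℝ) ≤ R := hdiam ▸ Metric.diam_nonneg
    exact Metric.mem_ball_self (lt_of_le_of_lt this hfar)
  have hpre : IsPreconnected (Metric.ball z r) := by
    rw [← UpperHalfPlane.isEmbedding_coe.isInducing.isPreconnected_image,
      UpperHalfPlane.image_coe_ball]
    exact (convex_ball _ _).isPreconnected
  exact hDsub.trans (hpre.subset_connectedComponentIn hzball hball_sub)
end

section
/- Let α be a geodesic in the hyperbolic plane and let s and t be geodesic segments lying (weakly) on the same side of α, with t disjoint from α, and let u be a geodesic segment lying strictly on the opposite side of α. Then no geodesic can cross s, then u, then t in that order. -/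
/-!
Between times `t₂` and `t₃` the geodesic `γ` leaves the open side of `α` containing `t`, and
between `t₁` and `t₂` it leaves the closed side containing `s`, so by connectedness it meets `α`
at times `r₁ ≤ t₂ ≤ r₂`. Geodesics in `ℍ` are unique: a Möbius isometry moves the endpoints onto
a vertical line, where the metric is `|log y - log y'|` and equality in the triangle inequality
pins a point down. Hence `γ` agrees on `[r₁, r₂]` with a reparametrization of `α`, and `γ t₂`
lies on `α`, which `u` avoids.
-/

open UpperHalfPlane Set Filter MeasureTheory Pointwise

local notation "SL2R" => Matrix.SpecialLinearGroup (Fin 2) ℝ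

/-- A geodesic segment of `ℍ`, viewed as a set. -/
def IsGeodesicSegment (s : Set ℍ) : Prop :=
  ∃ (σ : ℝ → ℍ) (a b : ℝ), a ≤ b ∧
    (∀ u ∈ Set.Icc a b, ∀ w ∈ Set.Icc a b, dist (σ u) (σ w) = |u - w|) ∧
    s = σ '' Set.Icc a b


theorem eq_of_dist_add_dist_eq_of_dist_eq {V P : Type*} [NormedAddCommGroup V]
    [NormedSpace ℝ V] [StrictConvexSpace ℝ V] [MetricSpace P] [NormedAddTorsor V P]
    {x y y' z : P} (h : dist x y + dist y z = dist x z) (h' : dist x y' + dist y' z = dist x z)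
    (hy : dist x y = dist x y') : y = y' := by
  rcases eq_or_ne x z with rfl | hxz
  · have hy₀ : dist x y = 0 := by
      rw [dist_self, dist_comm y] at h
      linarith
    rw [← dist_eq_zero.1 (hy.symm.trans hy₀), dist_eq_zero.1 hy₀]
  · have hd : dist x z ≠ 0 := dist_ne_zero.2 hxz
    have key : ∀ w : P, dist x w + dist w z = dist x z → dist x w = dist x y →
        w = AffineMap.lineMap x z (dist x y / dist x z) := fun w hw hwy =>
      eq_lineMap_of_dist_eq_mul_of_dist_eq_mul (by field_simp; exact hwy)
        (by field_simp; linarith)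
    exact (key y h rfl).trans (key y' h' hy.symm).symm

namespace UpperHalfPlane

theorem re_eq_of_dist_eq_dist_log_im {z w : ℍ}
    (h : dist z w = dist (Real.log z.im) (Real.log w.im)) : z.re = w.re := by
  set v : ℍ := mk ⟨z.re, w.im⟩ w.im_pos
  have hv : Real.cosh (dist z w) = Real.cosh (dist z v) := by
    rw [h, dist_of_re_eq (z := z) (w := v) rfl]
    rfl
  rw [cosh_dist, cosh_dist, add_right_inj] at hv
  change _ / (2 * z.im * w.im) = _ / (2 * z.im * w.im) at hv
  rw [div_left_inj' (by positivity : 2 * z.im * w.im ≠ 0),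
    Complex.dist_eq_re_im, Complex.dist_eq_re_im, Real.sq_sqrt (by positivity),
    Real.sq_sqrt (by positivity)] at hv
  change (z.re - w.re) ^ 2 + (z.im - w.im) ^ 2 = (z.re - z.re) ^ 2 + (z.im - w.im) ^ 2 at hv
  exact sub_eq_zero.1 (pow_eq_zero_iff two_ne_zero |>.1 (by linarith))

theorem dist_eq_dist_log_im_of_dist_add_dist_eq {a b m : ℍ} (hab : a.re = b.re)
    (h : dist a m + dist m b = dist a b) :
    dist a m = dist (Real.log a.im) (Real.log m.im) ∧
      dist m b = dist (Real.log m.im) (Real.log b.im) := by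
  have ham := dist_log_im_le a m
  have hmb := dist_log_im_le m b
  have := dist_triangle (Real.log a.im) (Real.log m.im) (Real.log b.im)
  rw [dist_of_re_eq hab] at h
  constructor <;> linarith

theorem eq_of_dist_add_dist_eq_of_dist_eq_of_re_eq {a b m m' : ℍ} (hab : a.re = b.re)
    (h : dist a m + dist m b = dist a b) (h' : dist a m' + dist m' b = dist a b)
    (hm : dist a m = dist a m') : m = m' := by
  obtain ⟨ham, hmb⟩ := dist_eq_dist_log_im_of_dist_add_dist_eq hab h
  obtain ⟨ham', hmb'⟩ := dist_eq_dist_log_im_of_dist_add_dist_eq hab h'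
  have hlog : Real.log m.im = Real.log m'.im :=
    _root_.eq_of_dist_add_dist_eq_of_dist_eq (x := Real.log a.im) (z := Real.log b.im)
      (by rw [← ham, ← hmb, h, dist_of_re_eq hab])
      (by rw [← ham', ← hmb', h', dist_of_re_eq hab])
      (by rw [← ham, ← ham', hm])
  refine ext_re_im ?_ (Real.log_injOn_pos m.im_pos m'.im_pos hlog)
  rw [← re_eq_of_dist_eq_dist_log_im ham, re_eq_of_dist_eq_dist_log_im ham']

theorem re_modular_S_smul_vadd {z : ℍ} {c r : ℝ} (hr : 0 < r)
    (hz : (z.re - c) ^ 2 + z.im ^ 2 = r ^ 2) :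
    (ModularGroup.S • ((r - c) +ᵥ z)).re = -(2 * r)⁻¹ := by
  have hpos : 0 < r - c + z.re := by nlinarith [z.im_pos]
  rw [modular_S_smul, mk_re, Complex.inv_re, Complex.neg_re, Complex.normSq_neg, coe_vadd,
    Complex.normSq_apply]
  simp only [Complex.add_re, Complex.ofReal_re, Complex.add_im, Complex.ofReal_im, zero_add,
    coe_re, coe_im]
  field_simp
  nlinarith

theorem exists_isometry_re_eq (a b : ℍ) : ∃ f : ℍ → ℍ, Isometry f ∧ (f a).re = (f b).re := by
  rcases eq_or_ne a.re b.re with hab | hab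
  · exact ⟨id, isometry_id, hab⟩
  -- `a` and `b` lie on the circle of centre `c` and radius `r`, orthogonal to `ℝ`;
  -- `z ↦ -1 / (z + r - c)` sends its endpoint `c - r` to `∞` and the circle onto a vertical line.
  set c := (a.re ^ 2 + a.im ^ 2 - b.re ^ 2 - b.im ^ 2) / (2 * (a.re - b.re))
  set r := √((a.re - c) ^ 2 + a.im ^ 2)
  have hr : 0 < r := Real.sqrt_pos.2 (by nlinarith [a.im_pos, sq_nonneg (a.re - c)])
  have ha : (a.re - c) ^ 2 + a.im ^ 2 = r ^ 2 := (Real.sq_sqrt (by positivity)).symm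
  have hb : (b.re - c) ^ 2 + b.im ^ 2 = r ^ 2 := by
    rw [← ha]
    have : a.re - b.re ≠ 0 := sub_ne_zero.2 hab
    simp only [c]
    field_simp
    ring
  refine ⟨fun z => ModularGroup.S • ((r - c) +ᵥ z),
    (isometry_smul ℍ (ModularGroup.S : SL2R)).comp (isometry_real_vadd _), ?_⟩
  simp only [re_modular_S_smul_vadd hr ha, re_modular_S_smul_vadd hr hb]

theorem eq_of_dist_add_dist_eq_of_dist_eq {a b m m' : ℍ}
    (h : dist a m + dist m b = dist a b) (h' : dist a m' + dist m' b = dist a b)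
    (hm : dist a m = dist a m') : m = m' := by
  obtain ⟨f, hf, hfab⟩ := exists_isometry_re_eq a b
  refine hf.injective (eq_of_dist_add_dist_eq_of_dist_eq_of_re_eq hfab ?_ ?_ ?_) <;>
    simpa only [hf.dist_eq]

end UpperHalfPlane

theorem exists_mem_uIcc_apply_mem_of_mem_connectedComponentIn_compl {X : Type*}
    [TopologicalSpace X] {S : Set X} {w : X} {γ : ℝ → X} {a b : ℝ}
    (hγ : ContinuousOn γ (uIcc a b)) (ha : γ a ∈ connectedComponentIn Sᶜ w)
    (hb : γ b ∉ connectedComponentIn Sᶜ w) : ∃ r ∈ uIcc a b, γ r ∈ S := by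
  by_contra! hS
  have hsub : γ '' uIcc a b ⊆ connectedComponentIn Sᶜ (γ a) :=
    (isPreconnected_uIcc.image γ hγ).subset_connectedComponentIn ⟨a, left_mem_uIcc, rfl⟩
      (by rintro _ ⟨r, hr, rfl⟩; exact hS r hr)
  rw [← connectedComponentIn_eq ha] at hsub
  exact hb (hsub ⟨b, right_mem_uIcc, rfl⟩)

namespace IsGeodesicLine

variable {α β γ : ℝ → ℍ}

theorem isometry (hγ : IsGeodesicLine γ) : Isometry γ :=
  Isometry.of_dist_eq fun s t => by rw [hγ, Real.dist_eq]

theorem comp_add_mul (hα : IsGeodesicLine α) {ε : ℝ} (hε : |ε| = 1) (c : ℝ) :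
    IsGeodesicLine fun s => α (c + ε * s) := fun s t => by
  rw [hα, add_sub_add_left_eq_sub, ← mul_sub, abs_mul, hε, one_mul]

theorem dist_add_dist_eq (hγ : IsGeodesicLine γ) {r₁ t r₂ : ℝ} (h₁ : r₁ ≤ t) (h₂ : t ≤ r₂) :
    dist (γ r₁) (γ t) + dist (γ t) (γ r₂) = dist (γ r₁) (γ r₂) := by
  rw [hγ, hγ, hγ, abs_of_nonpos (by linarith), abs_of_nonpos (by linarith),
    abs_of_nonpos (by linarith)]
  ring

theorem eqOn_Icc (hβ : IsGeodesicLine β) (hγ : IsGeodesicLine γ) {r₁ r₂ : ℝ}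
    (h₁ : β r₁ = γ r₁) (h₂ : β r₂ = γ r₂) : EqOn β γ (Icc r₁ r₂) := fun t ⟨ht₁, ht₂⟩ =>
  UpperHalfPlane.eq_of_dist_add_dist_eq_of_dist_eq
    (by rw [← h₁, ← h₂]; exact hβ.dist_add_dist_eq ht₁ ht₂) (hγ.dist_add_dist_eq ht₁ ht₂)
    (by rw [← h₁, hβ, h₁, hγ])

theorem apply_mem_range (hα : IsGeodesicLine α) (hγ : IsGeodesicLine γ) {r₁ t r₂ : ℝ}
    (h₁ : r₁ ≤ t) (h₂ : t ≤ r₂) (hr₁ : γ r₁ ∈ range α) (hr₂ : γ r₂ ∈ range α) :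
    γ t ∈ range α := by
  obtain ⟨p, hp⟩ := hr₁
  obtain ⟨q, hq⟩ := hr₂
  have hpq : |q - p| = |r₂ - r₁| := by rw [← hα, ← hγ, hp, hq]
  obtain ⟨ε, hε, hqp⟩ : ∃ ε : ℝ, |ε| = 1 ∧ q - p = ε * (r₂ - r₁) := by
    rcases abs_eq_abs.1 hpq with h | h
    · exact ⟨1, abs_one, by rw [h, one_mul]⟩
    · exact ⟨-1, by simp, by rw [h]; ring⟩
  refine ⟨p - ε * r₁ + ε * t, hα.comp_add_mul hε (p - ε * r₁) |>.eqOn_Icc hγ ?_ ?_ ⟨h₁, h₂⟩⟩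
  · simp only [sub_add_cancel, hp]
  · simp only [← hq]
    congr 1
    linear_combination -hqp

end IsGeodesicLine

theorem stmt17_general (α : ℝ → ℍ) (hα : IsGeodesicLine α)
    (s t u : Set ℍ)
    -- `w₀` marks the side of `α` containing `s` and `t`
    (w₀ : ℍ)
    (hsside : s ⊆ connectedComponentIn (Set.range α)ᶜ w₀ ∪ Set.range α)
    (htside : t ⊆ connectedComponentIn (Set.range α)ᶜ w₀)
    (huside : u ⊆ (connectedComponentIn (Set.range α)ᶜ w₀ ∪ Set.range α)ᶜ) :
    ¬ ∃ (γ : ℝ → ℍ) (_ : IsGeodesicLine γ) (t₁ t₂ t₃ : ℝ),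
        t₁ < t₂ ∧ t₂ < t₃ ∧ γ t₁ ∈ s ∧ γ t₂ ∈ u ∧ γ t₃ ∈ t := by
  rintro ⟨γ, hγ, t₁, t₂, t₃, h₁₂, h₂₃, hs₁, hu₂, ht₃⟩
  have hγc := hγ.isometry.continuous
  have hC₂ : γ t₂ ∉ connectedComponentIn (range α)ᶜ w₀ := fun h => huside hu₂ (.inl h)
  have hα₂ : γ t₂ ∉ range α := fun h => huside hu₂ (.inr h)
  obtain ⟨r₁, hr₁, hαr₁⟩ : ∃ r₁ ∈ uIcc t₁ t₂, γ r₁ ∈ range α := by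
    rcases hsside hs₁ with h | h
    · exact exists_mem_uIcc_apply_mem_of_mem_connectedComponentIn_compl
        hγc.continuousOn h hC₂
    · exact ⟨t₁, left_mem_uIcc, h⟩
  obtain ⟨r₂, hr₂, hαr₂⟩ := exists_mem_uIcc_apply_mem_of_mem_connectedComponentIn_compl
    hγc.continuousOn (htside ht₃) hC₂
  rw [uIcc_of_le h₁₂.le] at hr₁
  rw [uIcc_of_ge h₂₃.le] at hr₂
  exact hα₂ (hα.apply_mem_range hγ hr₁.2 hr₂.1 hαr₁ hαr₂)

/-- let `α` be a geodesic, let `s` and `t` be geodesic segments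
lying weakly on the same side of `α` with `t` disjoint from `α`, and let `u` be
a geodesic segment lying strictly on the opposite side.  Then no geodesic can
cross `s`, then `u`, then `t`, in this order. -/
theorem stmt17 (α : ℝ → ℍ) (hα : IsGeodesicLine α)
    (s t u : Set ℍ)
    (hs : IsGeodesicSegment s) (ht : IsGeodesicSegment t)
    (hu : IsGeodesicSegment u)
    -- `w₀` marks the side of `α` containing `s` and `t`
    (w₀ : ℍ) (hw₀ : w₀ ∉ Set.range α)
    (hsside : s ⊆ connectedComponentIn (Set.range α)ᶜ w₀ ∪ Set.range α)
    (htside : t ⊆ connectedComponentIn (Set.range α)ᶜ w₀)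
    (huside : u ⊆ (connectedComponentIn (Set.range α)ᶜ w₀ ∪ Set.range α)ᶜ) :
    ¬ ∃ (γ : ℝ → ℍ) (_ : IsGeodesicLine γ) (t₁ t₂ t₃ : ℝ),
        t₁ < t₂ ∧ t₂ < t₃ ∧ γ t₁ ∈ s ∧ γ t₂ ∈ u ∧ γ t₃ ∈ t :=
  stmt17_general α hα s t u w₀ hsside htside huside
end
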